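/- Suppose b = 1, ε and a are real with ε² − a² < 2, and set ω₀ = √(2 − ε² + a²) and τ₀ = (1/ω₀)·arccos((1 − (1 + εa)ω₀²)/(1 + a²ω₀²)). If moreover ε + a(1 − ω₀²) ≥ 0, then Δ(iω₀, τ₀) = 0; together with Δ(0, τ₀) = 0, the characteristic equation thus has a zero root and a pair of purely imaginary roots ±iω₀ at τ = τ₀. -/

import Mathlib

open Complex

/-- The characteristic function Δ(λ, τ) = λ² − ελ + 1 − (aλ + b)·exp(−λτ) of the
linearized van der Pol equation with delayed feedback. -/
noncomputable def charFn (ε a b τ : ℝ) (lam : ℂ) : ℂ :=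
  lam ^ 2 - (ε : ℂ) * lam + 1 - ((a : ℂ) * lam + (b : ℂ)) * Complex.exp (-lam * (τ : ℂ))

/-!
For `b = 1`, `Δ(iω, τ) = 0` says `(1 + iaω)·e^{-iωτ} = 1 - ω² - iεω`. Read as a linear system in
`cos (ωτ)` and `sin (ωτ)`, it has the unique solution
`c = (1 - (1 + εa)ω²)/(1 + a²ω²)`, `s = ω(ε + a(1 - ω²))/(1 + a²ω²)`, and
`c² + s² - 1 = ω²(ω² - (2 - ε² + a²))/(1 + a²ω²)`, so `(c, s)` lies on the unit circle exactly
at `ω = ω₀`. Then `ω₀τ₀ = arccos c` has cosine `c`, and its sine `√(1 - c²)` equals `s` because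
`s ≥ 0`.
-/

theorem charFn_zero (ε a b τ : ℝ) : charFn ε a b τ 0 = 1 - b := by
  simp [charFn]

theorem charFn_I_mul_ofReal_eq_zero_iff (ε a b τ ω : ℝ) :
    charFn ε a b τ (I * ω) = 0 ↔
      b * Real.cos (ω * τ) + a * ω * Real.sin (ω * τ) = 1 - ω ^ 2 ∧
        b * Real.sin (ω * τ) - a * ω * Real.cos (ω * τ) = ε * ω := by
  have hexp : Complex.exp (-(I * ω) * τ) = Real.cos (ω * τ) - Real.sin (ω * τ) * I := by
    rw [show -(I * ω) * (τ : ℂ) = ((-(ω * τ) : ℝ) : ℂ) * I by push_cast; ring, exp_mul_I,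
      ← ofReal_cos, ← ofReal_sin, Real.cos_neg, Real.sin_neg]
    push_cast
    ring
  rw [charFn, hexp, Complex.ext_iff]
  simp only [sub_re, sub_im, add_re, add_im, mul_re, mul_im, sq, I_re, I_im, ofReal_re,
    ofReal_im, one_re, one_im, zero_re, zero_im]
  constructor <;> rintro ⟨hre, him⟩ <;> constructor <;> linarith

namespace Real

theorem cos_arccos_of_sq_add_sq_eq_one {c s : ℝ} (h : c ^ 2 + s ^ 2 = 1) :
    cos (arccos c) = c :=
  cos_arccos (by nlinarith [sq_nonneg s]) (by nlinarith [sq_nonneg s])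

theorem sin_arccos_of_sq_add_sq_eq_one {c s : ℝ} (h : c ^ 2 + s ^ 2 = 1) (hs : 0 ≤ s) :
    sin (arccos c) = s := by
  rw [sin_arccos, show 1 - c ^ 2 = s ^ 2 by linarith, sqrt_sq hs]

end Real

namespace VanDerPol

variable (ε a ω : ℝ)

noncomputable def hopfCos : ℝ := (1 - (1 + ε * a) * ω ^ 2) / (1 + a ^ 2 * ω ^ 2)

noncomputable def hopfSin : ℝ := ω * (ε + a * (1 - ω ^ 2)) / (1 + a ^ 2 * ω ^ 2)

theorem hopfCos_add_mul_hopfSin : hopfCos ε a ω + a * ω * hopfSin ε a ω = 1 - ω ^ 2 := by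
  unfold hopfCos hopfSin
  field_simp
  ring

theorem hopfSin_sub_mul_hopfCos : hopfSin ε a ω - a * ω * hopfCos ε a ω = ε * ω := by
  unfold hopfCos hopfSin
  field_simp
  ring

theorem hopfSin_nonneg {ε a ω : ℝ} (hω : 0 ≤ ω) (hs : 0 ≤ ε + a * (1 - ω ^ 2)) :
    0 ≤ hopfSin ε a ω := by
  unfold hopfSin
  positivity

theorem hopfCos_sq_add_hopfSin_sq {ε a ω : ℝ} (hω : ω ^ 2 = 2 - ε ^ 2 + a ^ 2) :
    hopfCos ε a ω ^ 2 + hopfSin ε a ω ^ 2 = 1 := by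
  unfold hopfCos hopfSin
  field_simp
  linear_combination (ω ^ 2 * (1 + a ^ 2 * ω ^ 2)) * hω

end VanDerPol

open VanDerPol in
/-- For b = 1 with ε² − a² < 2, setting ω₀ = √(2 − ε² + a²) and
τ₀ = (1/ω₀)·arccos((1 − (1 + εa)ω₀²)/(1 + a²ω₀²)), if ε + a(1 − ω₀²) ≥ 0 then
Δ(iω₀, τ₀) = 0; together with Δ(0, τ₀) = 0, the characteristic equation has a zero root
and a pair of purely imaginary roots ±iω₀ at τ = τ₀. -/
theorem zero_hopf_roots (ε a b ω₀ τ₀ : ℝ) (hb : b = 1) (h2 : ε ^ 2 - a ^ 2 < 2)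
    (hω : ω₀ = Real.sqrt (2 - ε ^ 2 + a ^ 2))
    (hτ : τ₀ = (1 / ω₀) *
      Real.arccos ((1 - (1 + ε * a) * ω₀ ^ 2) / (1 + a ^ 2 * ω₀ ^ 2)))
    (hs : 0 ≤ ε + a * (1 - ω₀ ^ 2)) :
    charFn ε a b τ₀ (Complex.I * (ω₀ : ℂ)) = 0 ∧ charFn ε a b τ₀ 0 = 0 := by
  subst hb
  have hrad : 0 < 2 - ε ^ 2 + a ^ 2 := by linarith
  have hω₀ : 0 < ω₀ := hω ▸ Real.sqrt_pos.mpr hrad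
  have hω₀sq : ω₀ ^ 2 = 2 - ε ^ 2 + a ^ 2 := hω ▸ Real.sq_sqrt hrad.le
  have hθ : ω₀ * τ₀ = Real.arccos (hopfCos ε a ω₀) := by
    rw [hτ, hopfCos]
    field_simp
  have hunit := hopfCos_sq_add_hopfSin_sq hω₀sq
  have hcos : Real.cos (ω₀ * τ₀) = hopfCos ε a ω₀ := by
    rw [hθ, Real.cos_arccos_of_sq_add_sq_eq_one hunit]
  have hsin : Real.sin (ω₀ * τ₀) = hopfSin ε a ω₀ := by
    rw [hθ, Real.sin_arccos_of_sq_add_sq_eq_one hunit (hopfSin_nonneg hω₀.le hs)]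
  refine ⟨(charFn_I_mul_ofReal_eq_zero_iff ..).mpr ⟨?_, ?_⟩, by simp [charFn_zero]⟩
  · rw [hcos, hsin, one_mul]
    exact hopfCos_add_mul_hopfSin ε a ω₀
  · rw [hcos, hsin, one_mul]
    exact hopfSin_sub_mul_hopfCos ε a ω₀
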